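/- The extension of an intensional strategy λ is the smallest closed set of derivations containing the finite support of the extension of λ (i.e., the topological closure of the set of finite derivations generated by λ). -/

import Mathlib

/-- A derivation over objects `O` and labels `L`: a partial function on ℕ whose
domain is an initial segment, with composable consecutive steps. -/
structure Deriv (O L : Type) where
  step : ℕ → Option (O × L × O)
  initial : ∀ i, step (i + 1) ≠ none → step i ≠ none
  comp : ∀ i s t, step i = some s → step (i + 1) = some t → t.1 = s.2.2

namespace Deriv
/-- Non-empty derivation. -/
def NE {O L : Type} (π : Deriv O L) : Prop := π.step 0 ≠ none
/-- Finite derivation. -/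
def Finite {O L : Type} (π : Deriv O L) : Prop := ∃ n, π.step n = none
/-- Derivation over the set of steps `Γ` of an ARS. -/
def Over {O L : Type} (Γ : Set (O × L × O)) (π : Deriv O L) : Prop :=
  ∀ i s, π.step i = some s → s ∈ Γ
end Deriv

/-- `π₀` is a prefix of `π`. -/
def DPrefix {O L : Type} (π₀ π : Deriv O L) : Prop :=
  ∀ i s, π₀.step i = some s → π.step i = some s

/-- History (trace) of the first `j` steps of a derivation. -/
def histD {O L : Type} (π : Deriv O L) (j : ℕ) : List (O × L) :=
  (List.range j).filterMap fun i => (π.step i).map fun s => (s.1, s.2.1)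

/-- Extension of an intensional strategy with memory. -/
def ExtOf {O L : Type} (lam : List (O × L) → O → Set (O × L × O)) : Set (Deriv O L) :=
  {π | π.NE ∧ ∀ j s, π.step j = some s → s ∈ lam (histD π j) s.1}

/-- Extension of a memoryless intensional strategy. -/
def MExtOf {O L : Type} (lam : O → Set (O × L × O)) : Set (Deriv O L) :=
  {π | π.NE ∧ ∀ j s, π.step j = some s → s ∈ lam s.1}

/-- Well-formedness of an intensional strategy with memory over the ARS `Γ`:
every chosen step has the current object as source and belongs to `Γ`. -/
def WfStrat {O L : Type} (Γ : Set (O × L × O))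
    (lam : List (O × L) → O → Set (O × L × O)) : Prop :=
  ∀ α a s, s ∈ lam α a → s.1 = a ∧ s ∈ Γ

/-- Well-formedness of a memoryless intensional strategy. -/
def MWfStrat {O L : Type} (Γ : Set (O × L × O)) (lam : O → Set (O × L × O)) : Prop :=
  ∀ a s, s ∈ lam a → s.1 = a ∧ s ∈ Γ

/-- `Γ` is a functional relation. -/
def FunctionalARS {O L : Type} (Γ : Set (O × L × O)) : Prop :=
  ∀ a φ b₁ b₂, (a, φ, b₁) ∈ Γ → (a, φ, b₂) ∈ Γ → b₁ = b₂

/-- `π` is a limit point of `ζ`: every finite non-empty prefix of `π` is a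
prefix of some member of `ζ`. -/
def LimPt {O L : Type} (ζ : Set (Deriv O L)) (π : Deriv O L) : Prop :=
  π.NE ∧ ∀ π₀ : Deriv O L, π₀.Finite → π₀.NE → DPrefix π₀ π → ∃ π' ∈ ζ, DPrefix π₀ π'

/-- `ζ` is closed: it contains all its limit points. -/
def ClosedStrat {O L : Type} (ζ : Set (Deriv O L)) : Prop :=
  ∀ π, LimPt ζ π → π ∈ ζ

/-- `ζ` is closed under non-empty prefixes. -/
def PrefClosed {O L : Type} (ζ : Set (Deriv O L)) : Prop :=
  ∀ π ∈ ζ, ∀ π₀ : Deriv O L, π₀.NE → DPrefix π₀ π → π₀ ∈ ζ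

/-! A derivation obeys `λ` iff each of its steps does, and whether step `j` obeys `λ` depends
only on the first `j + 1` steps. Hence the extension is closed under non-empty prefixes, which
makes every member a limit point of its own finite prefixes (minimality), and a limit point
obeys `λ` at step `j` because its prefix of length `j + 1` extends to a member (closedness). -/

namespace Deriv

variable {O L : Type}

lemma step_ne_none_of_le (π : Deriv O L) {i j : ℕ} (hij : i ≤ j) (hj : π.step j ≠ none) :
    π.step i ≠ none := by
  induction hij with
  | refl => exact hj
  | step _ ih => exact ih (π.initial _ hj)

def trunc (π : Deriv O L) (n : ℕ) : Deriv O L where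
  step i := if i < n then π.step i else none
  initial i h := by
    by_cases hi : i + 1 < n
    · rw [if_pos hi] at h
      rw [if_pos (Nat.lt_of_succ_lt hi)]
      exact π.initial i h
    · exact absurd (if_neg hi) h
  comp i s t hs ht := by
    split_ifs at hs ht
    exact π.comp i s t hs ht

lemma trunc_step_of_lt (π : Deriv O L) {n i : ℕ} (h : i < n) : (π.trunc n).step i = π.step i :=
  if_pos h

lemma trunc_finite (π : Deriv O L) (n : ℕ) : (π.trunc n).Finite :=
  ⟨n, if_neg (lt_irrefl n)⟩

lemma dPrefix_trunc (π : Deriv O L) (n : ℕ) : DPrefix (π.trunc n) π := by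
  intro i s h
  by_cases hi : i < n
  · rwa [trunc_step_of_lt π hi] at h
  · exact absurd h (by simp [trunc, hi])

end Deriv

section

variable {O L : Type}

lemma histD_eq_of_dPrefix {π₀ π : Deriv O L} (hpre : DPrefix π₀ π) {j : ℕ}
    (hj : π₀.step j ≠ none) : histD π₀ j = histD π j := by
  refine List.filterMap_congr fun i hi => ?_
  obtain ⟨t, ht⟩ := Option.ne_none_iff_exists'.mp
    (π₀.step_ne_none_of_le (List.mem_range.mp hi).le hj)
  rw [ht, hpre i t ht]

lemma LimPt.mono {ζ ζ' : Set (Deriv O L)} {π : Deriv O L} (h : LimPt ζ π) (hsub : ζ ⊆ ζ') :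
    LimPt ζ' π := by
  refine ⟨h.1, fun π₀ hfin hne hpre => ?_⟩
  obtain ⟨π', hπ', hpre'⟩ := h.2 π₀ hfin hne hpre
  exact ⟨π', hsub hπ', hpre'⟩

lemma limPt_finite_of_prefClosed {ζ : Set (Deriv O L)} (hζ : PrefClosed ζ) {π : Deriv O L}
    (hπ : π ∈ ζ) (hne : π.NE) : LimPt {π ∈ ζ | π.Finite} π :=
  ⟨hne, fun π₀ hfin hne₀ hpre => ⟨π₀, ⟨hζ π hπ π₀ hne₀ hpre, hfin⟩, fun _ _ h => h⟩⟩

lemma prefClosed_extOf (lam : List (O × L) → O → Set (O × L × O)) : PrefClosed (ExtOf lam) := by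
  intro π hπ π₀ hne hpre
  refine ⟨hne, fun j s hj => ?_⟩
  rw [histD_eq_of_dPrefix hpre (by simp [hj])]
  exact hπ.2 j s (hpre j s hj)

lemma closedStrat_extOf (lam : List (O × L) → O → Set (O × L × O)) :
    ClosedStrat (ExtOf lam) := by
  rintro π ⟨hne, hlim⟩
  refine ⟨hne, fun j s hj => ?_⟩
  set π₀ := π.trunc (j + 1)
  have hj₀ : π₀.step j = some s := (π.trunc_step_of_lt j.lt_succ_self).trans hj
  have hne₀ : π₀.NE := π₀.step_ne_none_of_le j.zero_le (by simp [hj₀])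
  obtain ⟨π', hπ', hpre'⟩ := hlim π₀ (π.trunc_finite _) hne₀ (π.dPrefix_trunc _)
  have hmem₀ : π₀ ∈ ExtOf lam := prefClosed_extOf lam π' hπ' π₀ hne₀ hpre'
  rw [← histD_eq_of_dPrefix (π.dPrefix_trunc (j + 1)) (by simp [π₀, hj₀])]
  exact hmem₀.2 j s hj₀

end

theorem extension_is_closure_of_finite_support_general
    (O L : Type)
    (lam : List (O × L) → O → Set (O × L × O)) :
    ClosedStrat (ExtOf lam) ∧
    {π ∈ ExtOf lam | π.Finite} ⊆ ExtOf lam ∧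
    ∀ ζ : Set (Deriv O L), ClosedStrat ζ → {π ∈ ExtOf lam | π.Finite} ⊆ ζ →
      ExtOf lam ⊆ ζ :=
  ⟨closedStrat_extOf lam, fun _ hπ => hπ.1, fun _ hζ hsub π hπ =>
    hζ π ((limPt_finite_of_prefClosed (prefClosed_extOf lam) hπ hπ.1).mono hsub)⟩

/-- the extension of an intensional strategy is the smallest
closed set of derivations containing its finite support. -/
theorem extension_is_closure_of_finite_support
    (O L : Type) (Γ : Set (O × L × O)) (hΓ : FunctionalARS Γ)
    (lam : List (O × L) → O → Set (O × L × O)) (hwf : WfStrat Γ lam) :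
    ClosedStrat (ExtOf lam) ∧
    {π ∈ ExtOf lam | π.Finite} ⊆ ExtOf lam ∧
    ∀ ζ : Set (Deriv O L), ClosedStrat ζ → {π ∈ ExtOf lam | π.Finite} ⊆ ζ →
      ExtOf lam ⊆ ζ :=
  extension_is_closure_of_finite_support_general O L lam
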